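/- The TIOA of an augmented environment actor with a finite ERS list of length n performs exactly n synchronization transitions in any complete run that avoids deadlock, one per ERS entry and in list order, and the time at which the k-th synchronization occurs equals the sum of the first k delay values of the ERS list (measured from the start of the run). -/

import Mathlib

/- The TIOA of an augmented environment actor: single location with invariant
`clock ≤ timeProg(ERS)` (delay of the first ERS entry), and a send/receive edge that
fires exactly when `clock` equals that delay, synchronizing on the channel of the
first entry, resetting the clock and removing the entry.  A complete run is one in
which the ERS list becomes empty. -/

structure Entry where
  msg : ℕ
  dly : ℝ
  chan : ℕ
deriving Inhabited

/-- Complete runs of the augmented environment actor.  `ARun ers c t evs` means: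
from remaining list `ers`, clock value `c` and absolute time `t`, the actor performs
a deadlock-free complete run whose synchronization events (with absolute times and
channels) are `evs`. -/
inductive ARun : List Entry → ℝ → ℝ → List (ℝ × ℕ) → Prop
  | done (c t : ℝ) : ARun [] c t []
  | delay (e : Entry) (tl : List Entry) (c d t : ℝ) (evs : List (ℝ × ℕ)) :
      0 ≤ d → c + d ≤ e.dly → ARun (e :: tl) (c + d) (t + d) evs →
      ARun (e :: tl) c t evs
  | sync (e : Entry) (tl : List Entry) (t : ℝ) (evs : List (ℝ × ℕ)) :
      ARun tl 0 t evs → ARun (e :: tl) e.dly t ((t, e.chan) :: evs)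

/-- The expected timed events of an ERS list starting at absolute time `t`: the k-th
event occurs at `t` plus the sum of the first `k` delays, on the k-th channel. -/
def timedEvents : ℝ → List Entry → List (ℝ × ℕ)
  | _, [] => []
  | t, e :: tl => (t + e.dly, e.chan) :: timedEvents (t + e.dly) tl

/-! Along a run the quantity `time - clock`, the absolute time of the last synchronization, is
invariant under delays, and a synchronization on entry `e` happens exactly `e.dly` after it and
moves it to the present. Hence the events are `timedEvents 0 ers`, whose `k`-th entry is read off
by induction on the list. -/

namespace ARun

theorem eq_timedEvents {ers : List Entry} {c t : ℝ} {evs : List (ℝ × ℕ)}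
    (h : ARun ers c t evs) : evs = timedEvents (t - c) ers := by
  induction h with
  | done => rfl
  | delay e tl c d t evs _ _ _ ih => rw [ih, add_sub_add_right_eq_sub]
  | sync e tl t evs _ ih => simp only [timedEvents, sub_add_cancel, ih, sub_zero]

end ARun

theorem length_timedEvents (t : ℝ) (ers : List Entry) :
    (timedEvents t ers).length = ers.length := by
  induction ers generalizing t with
  | nil => rfl
  | cons e tl ih => simp only [timedEvents, List.length_cons, ih]

theorem getElem?_timedEvents (t : ℝ) (ers : List Entry) {k : ℕ} (hk : k < ers.length) :
    (timedEvents t ers)[k]? = some (t + ∑ i ∈ Finset.range (k + 1), (ers.getD i default).dly,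
      (ers.getD k default).chan) := by
  induction ers generalizing t k with
  | nil => simp at hk
  | cons e tl ih =>
    cases k with
    | zero => simp [timedEvents]
    | succ k =>
      rw [timedEvents, List.getElem?_cons_succ, ih _ (Nat.lt_of_succ_lt_succ hk),
        Finset.sum_range_succ' _ (k + 1)]
      simp only [List.getD_cons_succ, List.getD_cons_zero, add_assoc, add_comm e.dly]

/-- in any complete deadlock-free run starting with clock 0 at time 0,
the augmented environment actor performs exactly `ers.length` synchronization
transitions, one per ERS entry and in list order, the k-th occurring at the sum of
the first k delay values of the ERS list. -/
theorem augmented_actor_run_events (ers : List Entry) (evs : List (ℝ × ℕ))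
    (h : ARun ers 0 0 evs) :
    evs = timedEvents 0 ers ∧ evs.length = ers.length ∧
    ∀ k, k < ers.length →
      evs[k]? = some (∑ i ∈ Finset.range (k + 1), (ers.getD i default).dly,
        (ers.getD k default).chan) := by
  have hevs : evs = timedEvents 0 ers := by simpa using h.eq_timedEvents
  subst hevs
  refine ⟨rfl, length_timedEvents 0 ers, fun k hk => ?_⟩
  rw [getElem?_timedEvents 0 ers hk, zero_add]
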